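/- Let E be a finite set, let f : 2^E → ℤ be submodular and let g : 2^E → ℤ be supermodular. Then the polyhedron {x ∈ ℝ^E | g(U) ≤ x(U) ≤ f(U) for all U ⊆ E} is box-integer. -/

import Mathlib

open Finset Pointwise

variable {ι : Type*} [Fintype ι]

/-- A vector is an integer vector if each coordinate is an integer. -/
def IsIntegerVec (x : ι → ℝ) : Prop := ∀ i, ∃ z : ℤ, x i = (z : ℝ)

/-- `F` is a (nonempty, exposed) face of `P`: the set of points of `P` maximizing some
linear functional `⟨c, ·⟩` over `P`. -/
def IsFace (P F : Set (ι → ℝ)) : Prop :=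
  F.Nonempty ∧ ∃ c : ι → ℝ, F = {x ∈ P | ∀ y ∈ P, ∑ i, c i * y i ≤ ∑ i, c i * x i}

/-- `P` is an integer polyhedron: every (nonempty) face contains an integer vector. -/
def IsIntegerPolyhedron (P : Set (ι → ℝ)) : Prop :=
  ∀ F : Set (ι → ℝ), IsFace P F → ∃ x ∈ F, IsIntegerVec x

/-- `Q` is box-integer: its intersection with any integer box is an integer polyhedron. -/
def IsBoxInteger (Q : Set (ι → ℝ)) : Prop :=
  ∀ c d : ι → ℤ, (∀ i, c i ≤ d i) →
    IsIntegerPolyhedron {x ∈ Q | ∀ i, (c i : ℝ) ≤ x i ∧ x i ≤ (d i : ℝ)}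

/-- Condition (★): for all `0 ≤ r ≤ k` and integer `w`, the set `rP ∩ (w - (k-r)P)`
is box-integer. -/
def ConditionStar (P : Set (ι → ℝ)) : Prop :=
  ∀ k r : ℕ, r ≤ k → ∀ w : ι → ℤ,
    IsBoxInteger (((r : ℝ) • P) ∩
      ((fun y => (fun i => (w i : ℝ)) - y) '' (((k - r : ℕ) : ℝ) • P)))

/-- The Integer Carathéodory Property: every integer vector `w ∈ kP` is a nonnegative
integer combination, with coefficients summing to `k`, of affinely independent integer
vectors in `P`. -/
def HasICP (P : Set (ι → ℝ)) : Prop :=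
  ∀ k : ℕ, 0 < k → ∀ w : ι → ℤ, (fun i => (w i : ℝ)) ∈ (k : ℝ) • P →
    ∃ (t : ℕ) (x : Fin t → (ι → ℝ)) (c : Fin t → ℕ),
      (∀ i, x i ∈ P) ∧ (∀ i, IsIntegerVec (x i)) ∧ AffineIndependent ℝ x ∧
      (∀ i, 0 < c i) ∧ (∑ i, c i = k) ∧ (fun j => (w j : ℝ)) = ∑ i, (c i : ℝ) • x i

/-- A function on subsets of a finite set is submodular. -/
def Submodular {E : Type*} [DecidableEq E] (f : Finset E → ℤ) : Prop :=
  ∀ A B : Finset E, f (A ∪ B) + f (A ∩ B) ≤ f A + f B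

/-!
Maximize a linear objective over the polytope cut by an integer box, and among the maximizers
take one, `x`, with the fewest slack constraints. If `x` had a fractional coordinate, the tight
constraints could not determine `x` on the set `S` of its fractional coordinates, and moving `x`
along a direction supported on `S` that keeps them tight would stay optimal and make one more
constraint tight.

That the tight constraints cannot determine `x` on `S` is where submodularity is used: the tight
sets of `f`, and those of `g`, are closed under `∪` and `∩`, so by uncrossing they can be replaced
by two chains, and then by the two families of pairwise disjoint differences of consecutive chain
members, all with integer sums of `x`. If the incidence vectors of two such families spanned `ℝ^S`,
counting would give a singleton `{s}` among them; then `x s` is an integer, and removing `s`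
repeats the argument until every coordinate in `S` is an integer.
-/

section SpansOn

variable {E : Type*}

/-- The restrictions to `S` of the incidence vectors of the members of `F` span `ℝ^S`
(stated dually). -/
def SpansOn (F : Finset (Finset E)) (S : Finset E) : Prop :=
  ∀ z : E → ℝ, (∀ e ∉ S, z e = 0) → (∀ U ∈ F, ∑ e ∈ U, z e = 0) → z = 0

variable {F : Finset (Finset E)} {S : Finset E}

theorem SpansOn.card_le (h : SpansOn F S) : S.card ≤ F.card := by
  let restrictSums : (S → ℝ) →ₗ[ℝ] (F → ℝ) :=
    (LinearMap.pi fun U : F => ∑ e ∈ (U : Finset E), LinearMap.proj e).comp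
      (Function.ExtendByZero.linearMap ℝ ((↑) : S → E))
  have hinj : Function.Injective restrictSums := by
    rw [← LinearMap.ker_eq_bot, LinearMap.ker_eq_bot']
    intro y hy
    have hext := h (Function.extend (↑) y 0)
      (fun e he => Function.extend_apply' _ _ _ fun ⟨s, hs⟩ => he (hs ▸ s.2))
      (fun U hU => by simpa [restrictSums] using congrFun hy ⟨U, hU⟩)
    ext s
    simpa [Subtype.val_injective.extend_apply] using congrFun hext s
  simpa using LinearMap.finrank_le_finrank_of_injective hinj

theorem SpansOn.filter_nonempty (h : SpansOn F S) : SpansOn (F.filter (·.Nonempty)) S := by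
  refine fun z hz hF => h z hz fun U hU => ?_
  rcases U.eq_empty_or_nonempty with rfl | hne
  · exact sum_empty
  · exact hF U (mem_filter.2 ⟨hU, hne⟩)

theorem SpansOn.image_erase [DecidableEq E] (h : SpansOn F S) (s : E) :
    SpansOn (F.image (·.erase s)) (S.erase s) := by
  intro z hz hF
  have hzs : z s = 0 := hz s (notMem_erase s S)
  refine h z (fun e he => hz e fun he' => he (mem_of_mem_erase he')) fun U hU => ?_
  rw [← sum_erase U hzs]
  exact hF _ (mem_image_of_mem _ hU)

end SpansOn

section DisjointFamilies

variable {E : Type*} [DecidableEq E] {π ρ : Finset (Finset E)} {S : Finset E}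

theorem two_mul_card_le_card_biUnion (hπ : (π : Set (Finset E)).PairwiseDisjoint id)
    (h2 : ∀ P ∈ π, 2 ≤ P.card) : 2 * π.card ≤ (π.biUnion id).card := by
  rw [card_biUnion hπ, mul_comm, ← smul_eq_mul, ← sum_const]
  exact sum_le_sum h2

/-- The sums of `z` over the members of `π` and over those of `ρ` both equal `z(S)`. -/
theorem SpansOn.erase_of_biUnion_eq (h : SpansOn (π ∪ ρ) S)
    (hπ : (π : Set (Finset E)).PairwiseDisjoint id) (hρ : (ρ : Set (Finset E)).PairwiseDisjoint id)
    (hπS : π.biUnion id = S) (hρS : ρ.biUnion id = S) {Q : Finset E} (hQ : Q ∈ ρ) :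
    SpansOn (π ∪ ρ.erase Q) S := by
  refine fun z hz hF => h z hz fun U hU => ?_
  rcases mem_union.1 hU with hU | hU
  · exact hF U (mem_union_left _ hU)
  rcases eq_or_ne U Q with rfl | hne
  · have hzπ : ∑ e ∈ S, z e = 0 := by
      rw [← hπS, sum_biUnion hπ]
      exact sum_eq_zero fun P hP => hF P (mem_union_left _ hP)
    rw [← hρS, sum_biUnion hρ, ← sum_erase_add _ _ hU] at hzπ
    simpa only [id, sum_eq_zero fun P hP => hF P (mem_union_right _ hP), zero_add] using hzπ
  · exact hF U (mem_union_right _ (mem_erase.2 ⟨hne, hU⟩))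

/-- Without singletons each family has at most `|S| / 2` nonempty members, and if both cover `S`
one of them is redundant, so there are too few members to span `ℝ^S`. -/
theorem SpansOn.exists_singleton_mem (h : SpansOn (π ∪ ρ) S) (hS : S.Nonempty)
    (hπ : (π : Set (Finset E)).PairwiseDisjoint id) (hρ : (ρ : Set (Finset E)).PairwiseDisjoint id)
    (hπS : π.biUnion id ⊆ S) (hρS : ρ.biUnion id ⊆ S) : ∃ s, {s} ∈ π ∪ ρ := by
  by_contra! hsing
  set π' := π.filter (·.Nonempty)
  set ρ' := ρ.filter (·.Nonempty)
  have htwo : ∀ P ∈ π ∪ ρ, P.Nonempty → 2 ≤ P.card := fun P hP hne => by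
    by_contra! hlt
    obtain ⟨s, rfl⟩ := card_eq_one.1 (show P.card = 1 by have := hne.card_pos; omega)
    exact hsing s hP
  have hπ' : (π' : Set (Finset E)).PairwiseDisjoint id :=
    hπ.subset (coe_subset.2 (filter_subset _ _))
  have hρ' : (ρ' : Set (Finset E)).PairwiseDisjoint id :=
    hρ.subset (coe_subset.2 (filter_subset _ _))
  have hπ'S : π'.biUnion id ⊆ S :=
    (biUnion_subset_biUnion_of_subset_left _ (filter_subset _ _)).trans hπS
  have hρ'S : ρ'.biUnion id ⊆ S :=
    (biUnion_subset_biUnion_of_subset_left _ (filter_subset _ _)).trans hρS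
  have hcardπ := two_mul_card_le_card_biUnion hπ' fun P hP =>
    htwo P (mem_union_left _ (mem_filter.1 hP).1) (mem_filter.1 hP).2
  have hcardρ := two_mul_card_le_card_biUnion hρ' fun P hP =>
    htwo P (mem_union_right _ (mem_filter.1 hP).1) (mem_filter.1 hP).2
  have hspan : SpansOn (π' ∪ ρ') S := by simpa [π', ρ', filter_union] using h.filter_nonempty
  by_cases hcover : π'.biUnion id = S ∧ ρ'.biUnion id = S
  · obtain ⟨Q₀, hQ₀⟩ : ρ'.Nonempty := by
      rw [nonempty_iff_ne_empty]
      rintro hρ'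
      simp [hρ', ← hcover.2] at hS
    have hspan' := hspan.erase_of_biUnion_eq hπ' hρ' hcover.1 hcover.2 hQ₀
    have := hspan'.card_le.trans (card_union_le _ _)
    have := card_erase_of_mem hQ₀
    have := card_pos.2 ⟨Q₀, hQ₀⟩
    rw [hcover.1] at hcardπ
    rw [hcover.2] at hcardρ
    omega
  · have := hspan.card_le.trans (card_union_le _ _)
    have := card_le_card hπ'S
    have := card_le_card hρ'S
    rcases not_and_or.1 hcover with hne | hne
    · have := card_lt_card (ssubset_of_subset_of_ne hπ'S hne)
      omega
    · have := card_lt_card (ssubset_of_subset_of_ne hρ'S hne)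
      omega

theorem SpansOn.mem_of_forall_sum_mem {G : AddSubgroup ℝ} (h : SpansOn (π ∪ ρ) S)
    (hπ : (π : Set (Finset E)).PairwiseDisjoint id) (hρ : (ρ : Set (Finset E)).PairwiseDisjoint id)
    (hπS : π.biUnion id ⊆ S) (hρS : ρ.biUnion id ⊆ S) {x : E → ℝ}
    (hx : ∀ P ∈ π ∪ ρ, ∑ e ∈ P, x e ∈ G) :
    ∀ e ∈ S, x e ∈ G := by
  induction S using strongInduction generalizing π ρ with
  | H S ih =>
  rcases S.eq_empty_or_nonempty with rfl | hS
  · simp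
  obtain ⟨s, hs⟩ := h.exists_singleton_mem hS hπ hρ hπS hρS
  have hsS : s ∈ S := by
    rcases mem_union.1 hs with hs | hs
    exacts [hπS (mem_biUnion.2 ⟨_, hs, mem_singleton_self s⟩),
      hρS (mem_biUnion.2 ⟨_, hs, mem_singleton_self s⟩)]
  have hxs : x s ∈ G := by simpa using hx _ hs
  have herase : ∀ σ : Finset (Finset E), σ.biUnion id ⊆ S →
      (σ.image (fun P : Finset E => P.erase s)).biUnion id ⊆ S.erase s := fun σ hσ => by
    simp only [biUnion_subset, mem_image, id] at hσ ⊢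
    rintro _ ⟨P, hP, rfl⟩
    exact erase_subset_erase s (hσ P hP)
  have hdisj : ∀ σ : Finset (Finset E), (σ : Set (Finset E)).PairwiseDisjoint id →
      (σ.image (fun P : Finset E => P.erase s) : Set (Finset E)).PairwiseDisjoint id := fun σ hσ =>
    hσ.image_finset_of_le (g := (fun P : Finset E => P.erase s)) fun P => erase_subset s P
  have ih' := ih (S.erase s) (erase_ssubset hsS) (π := π.image (fun P : Finset E => P.erase s))
    (ρ := ρ.image (fun P : Finset E => P.erase s)) (by rw [← image_union]; exact h.image_erase s)
    (hdisj π hπ) (hdisj ρ hρ) (herase π hπS) (herase ρ hρS) (by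
      rw [← image_union, forall_mem_image]
      intro P hP
      by_cases hsP : s ∈ P
      · rw [sum_erase_eq_sub hsP]
        exact sub_mem (hx P hP) hxs
      · rw [erase_eq_of_notMem hsP]
        exact hx P hP)
  intro e he
  rcases eq_or_ne e s with rfl | hne
  exacts [hxs, ih' e (mem_erase.2 ⟨hne, he⟩)]

end DisjointFamilies

section Chains

variable {E : Type*} [DecidableEq E]

/-- Induction on the number of members of `C` not below `U`, with `W` the least of them: then
`U ∩ W ∈ C`, and `χ_U = χ_{U ∪ W} + χ_{U ∩ W} - χ_W`. -/
theorem sum_eq_zero_of_forall_comparable_mem {L C : Finset (Finset E)}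
    (hunion : ∀ A ∈ L, ∀ B ∈ L, A ∪ B ∈ L) (hinter : ∀ A ∈ L, ∀ B ∈ L, A ∩ B ∈ L) (hCL : C ⊆ L)
    (hchain : IsChain (· ≤ ·) (C : Set (Finset E)))
    (hmem : ∀ W ∈ L, (∀ V ∈ C, V ≤ W ∨ W ≤ V) → W ∈ C) {z : E → ℝ}
    (hz : ∀ V ∈ C, ∑ e ∈ V, z e = 0) : ∀ U ∈ L, ∑ e ∈ U, z e = 0 := by
  suffices ∀ n, ∀ U ∈ L, (C.filter (¬ · ≤ U)).card = n → ∑ e ∈ U, z e = 0 from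
    fun U hU => this _ U hU rfl
  intro n
  induction n using Nat.strong_induction_on with | _ n ih => ?_
  intro U hU hn
  rcases (C.filter (¬ · ≤ U)).eq_empty_or_nonempty with hT | hT
  · refine hz U (hmem U hU fun V hV => Or.inl ?_)
    by_contra hVU
    exact (eq_empty_iff_forall_notMem.1 hT) V (mem_filter.2 ⟨hV, hVU⟩)
  obtain ⟨W, hWT, hWmin⟩ := Finset.exists_minimal hT
  obtain ⟨hWC, hWU⟩ := mem_filter.1 hWT
  have hWle : ∀ V ∈ C, ¬ V ≤ U → W ≤ V := fun V hV hVU =>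
    (hchain.total hV hWC).elim (hWmin (mem_filter.2 ⟨hV, hVU⟩)) id
  have hinterC : U ∩ W ∈ C := hmem _ (hinter U hU W (hCL hWC)) fun V hV => by
    by_cases hVU : V ≤ U
    · refine Or.inl (le_inf hVU ?_)
      exact (hchain.total hV hWC).resolve_right fun hWV => hWU (hWV.trans hVU)
    · exact Or.inr (inf_le_right.trans (hWle V hV hVU))
  have hcard : (C.filter (¬ · ≤ U ∪ W)).card < n := by
    refine hn ▸ card_lt_card ((ssubset_iff_of_subset fun V hV => ?_).2 ⟨W, hWT, ?_⟩)
    · obtain ⟨hV, hVUW⟩ := mem_filter.1 hV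
      exact mem_filter.2 ⟨hV, fun hVU => hVUW (hVU.trans le_sup_left)⟩
    · simp
  have := sum_union_inter (s₁ := U) (s₂ := W) (f := z)
  rw [ih _ hcard _ (hunion U hU W (hCL hWC)) rfl, hz _ hinterC, hz W hWC] at this
  linarith

theorem exists_isChain_sum_eq_zero_of_union_inter_mem (L : Finset (Finset E))
    (hunion : ∀ A ∈ L, ∀ B ∈ L, A ∪ B ∈ L) (hinter : ∀ A ∈ L, ∀ B ∈ L, A ∩ B ∈ L) :
    ∃ C ⊆ L, IsChain (· ≤ ·) (C : Set (Finset E)) ∧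
      ∀ z : E → ℝ, (∀ V ∈ C, ∑ e ∈ V, z e = 0) → ∀ U ∈ L, ∑ e ∈ U, z e = 0 := by
  classical
  obtain ⟨C, hC, hmax⟩ := exists_max_image
    (L.powerset.filter fun C : Finset (Finset E) => IsChain (· ≤ ·) (C : Set (Finset E)))
    card ⟨∅, by simp⟩
  obtain ⟨hCL, hchain⟩ : C ⊆ L ∧ IsChain (· ≤ ·) (C : Set (Finset E)) := by simpa using hC
  have hmem : ∀ W ∈ L, (∀ V ∈ C, V ≤ W ∨ W ≤ V) → W ∈ C := fun W hW hcomp => by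
    by_contra hWC
    have := hmax (insert W C) (by
      simpa [insert_subset_iff, hW, hCL] using
        hchain.insert fun V hV _ => (hcomp V hV).symm)
    rw [card_insert_of_notMem hWC] at this
    omega
  exact ⟨C, hCL, hchain, fun z hz =>
    sum_eq_zero_of_forall_comparable_mem hunion hinter hCL hchain hmem hz⟩

end Chains

section ChainLayers

variable {E : Type*} [DecidableEq E] {C : Finset (Finset E)}

def chainLayer (C : Finset (Finset E)) (U : Finset E) : Finset E :=
  U \ (C.filter (· < U)).sup id

theorem chainLayer_eq_self_or_sdiff (hC : IsChain (· ≤ ·) (C : Set (Finset E))) (U : Finset E) :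
    chainLayer C U = U ∨ ∃ V ∈ C, V < U ∧ chainLayer C U = U \ V := by
  rcases (C.filter (· < U)).eq_empty_or_nonempty with hempty | hne
  · left
    simp [chainLayer, hempty]
  · right
    have hclosed : SupClosed (C.filter (· < U) : Set (Finset E)) := fun A hA B hB =>
      (hC.total (mem_filter.1 hA).1 (mem_filter.1 hB).1).elim
        (fun h => (sup_of_le_right h).symm ▸ hB) (fun h => (sup_of_le_left h).symm ▸ hA)
    obtain ⟨hV, hVU⟩ := mem_filter.1 (hclosed.finsetSup_mem hne fun V hV => hV)
    exact ⟨_, hV, hVU, rfl⟩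

theorem disjoint_chainLayer_of_lt {U W : Finset E} (hU : U ∈ C) (hUW : U < W) :
    Disjoint (chainLayer C U) (chainLayer C W) :=
  disjoint_sdiff_self_right.mono_left
    (sdiff_subset.trans (le_sup (f := id) (mem_filter.2 ⟨hU, hUW⟩)))

theorem pairwiseDisjoint_chainLayer (hC : IsChain (· ≤ ·) (C : Set (Finset E))) :
    (C : Set (Finset E)).PairwiseDisjoint (chainLayer C) := fun _ hU _ hW hne =>
  (hC.total hU hW).elim (fun h => disjoint_chainLayer_of_lt hU (lt_of_le_of_ne h hne))
    (fun h => (disjoint_chainLayer_of_lt hW (lt_of_le_of_ne h hne.symm)).symm)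

variable {M : Type*} [AddCommGroup M]

theorem sum_eq_zero_of_sum_chainLayer_eq_zero (hC : IsChain (· ≤ ·) (C : Set (Finset E)))
    {z : E → M} (hz : ∀ U ∈ C, ∑ e ∈ chainLayer C U, z e = 0) :
    ∀ U ∈ C, ∑ e ∈ U, z e = 0 := by
  intro U
  induction U using strongInduction with | H U ih => ?_
  intro hU
  rcases chainLayer_eq_self_or_sdiff hC U with hlayer | ⟨V, hV, hVU, hlayer⟩
  · rw [← hlayer]
    exact hz U hU
  · rw [← sum_sdiff hVU.le, ← hlayer, hz U hU, ih V hVU hV, add_zero]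

theorem sum_chainLayer_mem (hC : IsChain (· ≤ ·) (C : Set (Finset E))) {G : AddSubgroup M}
    {x : E → M} (hx : ∀ U ∈ C, ∑ e ∈ U, x e ∈ G) {U : Finset E} (hU : U ∈ C) :
    ∑ e ∈ chainLayer C U, x e ∈ G := by
  rcases chainLayer_eq_self_or_sdiff hC U with hlayer | ⟨V, hV, hVU, hlayer⟩
  · rw [hlayer]
    exact hx U hU
  · rw [hlayer, sum_sdiff_eq_sub hVU.le]
    exact sub_mem (hx U hU) (hx V hV)

theorem exists_pairwiseDisjoint_of_union_inter_mem {L : Finset (Finset E)}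
    (hunion : ∀ A ∈ L, ∀ B ∈ L, A ∪ B ∈ L) (hinter : ∀ A ∈ L, ∀ B ∈ L, A ∩ B ∈ L)
    {G : AddSubgroup ℝ} {x : E → ℝ} (hL : ∀ U ∈ L, ∑ e ∈ U, x e ∈ G) {S : Finset E}
    (hout : ∀ e ∉ S, x e ∈ G) :
    ∃ π : Finset (Finset E), (π : Set (Finset E)).PairwiseDisjoint id ∧ π.biUnion id ⊆ S ∧
      (∀ P ∈ π, ∑ e ∈ P, x e ∈ G) ∧
      ∀ z : E → ℝ, (∀ e ∉ S, z e = 0) → (∀ P ∈ π, ∑ e ∈ P, z e = 0) →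
        ∀ U ∈ L, ∑ e ∈ U, z e = 0 := by
  obtain ⟨C, hCL, hC, hspan⟩ := exists_isChain_sum_eq_zero_of_union_inter_mem L hunion hinter
  refine ⟨C.image fun U => chainLayer C U ∩ S, ?_, ?_, ?_, ?_⟩
  · rw [coe_image]
    rintro _ ⟨U, hU, rfl⟩ _ ⟨W, hW, rfl⟩ hne
    exact (pairwiseDisjoint_chainLayer hC hU hW fun h => hne (h ▸ rfl)).mono
      inter_subset_left inter_subset_left
  · simp
  · rw [forall_mem_image]
    intro U hU
    rw [eq_sub_of_add_eq (sum_inter_add_sum_sdiff (chainLayer C U) S x)]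
    exact sub_mem (sum_chainLayer_mem hC (fun V hV => hL V (hCL hV)) hU)
      (sum_mem fun e he => hout e (mem_sdiff.1 he).2)
  · intro z hz hπ
    refine hspan z (sum_eq_zero_of_sum_chainLayer_eq_zero hC fun U hU => ?_)
    rw [← sum_subset inter_subset_left fun e he heS => hz e fun hS => heS (mem_inter.2 ⟨he, hS⟩)]
    exact hπ _ (mem_image_of_mem _ hU)

end ChainLayers

section TightSets

variable {E : Type*} [Fintype E]

noncomputable def tightSets (f : Finset E → ℤ) (x : E → ℝ) : Finset (Finset E) :=
  univ.filter fun U => ∑ e ∈ U, x e = f U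

theorem tightSets_neg (g : Finset E → ℤ) (x : E → ℝ) :
    tightSets (fun U => -g U) (-x) = tightSets g x := by
  ext U
  simp [tightSets, neg_inj]

variable [DecidableEq E]

theorem Submodular.union_mem_and_inter_mem_tightSets {f : Finset E → ℤ} (hf : Submodular f)
    {x : E → ℝ} (hx : ∀ U, ∑ e ∈ U, x e ≤ f U) {A B : Finset E} (hA : A ∈ tightSets f x)
    (hB : B ∈ tightSets f x) : A ∪ B ∈ tightSets f x ∧ A ∩ B ∈ tightSets f x := by
  simp only [tightSets, mem_filter, mem_univ, true_and] at hA hB ⊢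
  have hsub : ((f (A ∪ B) + f (A ∩ B) : ℤ) : ℝ) ≤ f A + f B := by exact_mod_cast hf A B
  have := sum_union_inter (s₁ := A) (s₂ := B) (f := x)
  have := hx (A ∪ B)
  have := hx (A ∩ B)
  push_cast at hsub
  constructor <;> linarith

theorem forall_mem_zmultiples_of_spansOn_tightSets {f g : Finset E → ℤ} (hf : Submodular f)
    (hg : Submodular fun U => -g U) {x : E → ℝ} (hxf : ∀ U, ∑ e ∈ U, x e ≤ f U)
    (hxg : ∀ U, (g U : ℝ) ≤ ∑ e ∈ U, x e) {S : Finset E}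
    (hout : ∀ e ∉ S, x e ∈ AddSubgroup.zmultiples (1 : ℝ))
    (hspan : SpansOn (tightSets f x ∪ tightSets g x) S) :
    ∀ e ∈ S, x e ∈ AddSubgroup.zmultiples (1 : ℝ) := by
  have hxg' : ∀ U, ∑ e ∈ U, (-x) e ≤ ((fun U => -g U) U : ℤ) := fun U => by
    simpa [sum_neg_distrib] using hxg U
  have htight : ∀ {h : Finset E → ℤ}, ∀ U ∈ tightSets h x,
      ∑ e ∈ U, x e ∈ AddSubgroup.zmultiples (1 : ℝ) :=
    fun {h} U hU => (mem_filter.1 hU).2 ▸ AddSubgroup.intCast_mem_zmultiples_one (h U)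
  obtain ⟨π, hπ, hπS, hπx, hπz⟩ := exists_pairwiseDisjoint_of_union_inter_mem
    (fun A hA B hB => (hf.union_mem_and_inter_mem_tightSets hxf hA hB).1)
    (fun A hA B hB => (hf.union_mem_and_inter_mem_tightSets hxf hA hB).2) htight hout
  obtain ⟨ρ, hρ, hρS, hρx, hρz⟩ := exists_pairwiseDisjoint_of_union_inter_mem
    (fun A hA B hB => by
      rw [← tightSets_neg] at hA hB ⊢; exact (hg.union_mem_and_inter_mem_tightSets hxg' hA hB).1)
    (fun A hA B hB => by
      rw [← tightSets_neg] at hA hB ⊢; exact (hg.union_mem_and_inter_mem_tightSets hxg' hA hB).2)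
    htight hout
  refine SpansOn.mem_of_forall_sum_mem (fun z hz hzπρ => hspan z hz fun U hU => ?_)
    hπ hρ hπS hρS fun P hP => (mem_union.1 hP).elim (hπx P) (hρx P)
  rcases mem_union.1 hU with hU | hU
  · exact hπz z hz (fun P hP => hzπρ P (mem_union_left _ hP)) U hU
  · exact hρz z hz (fun P hP => hzπρ P (mem_union_right _ hP)) U hU

end TightSets

section Polyhedron

variable {V κ : Type*} [AddCommGroup V] [Module ℝ V] [Fintype κ] {ℓ : κ → V →ₗ[ℝ] ℝ} {b : κ → ℝ}
  {x z : V}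

/-- The step length is given by the ratio test `t = min_{ℓ k z > 0} (b k - ℓ k x) / ℓ k z`. -/
theorem exists_add_smul_newly_tight (hx : ∀ k, ℓ k x ≤ b k)
    (hz : ∀ k, ℓ k x = b k → ℓ k z = 0) (hpos : ∃ k, 0 < ℓ k z) :
    ∃ t : ℝ, 0 < t ∧ (∀ k, ℓ k (x + t • z) ≤ b k) ∧ ∃ k, ℓ k x < b k ∧ ℓ k (x + t • z) = b k := by
  classical
  set K := univ.filter fun k => 0 < ℓ k z
  have hK : K.Nonempty := by simpa [K, Finset.Nonempty] using hpos
  have hslack : ∀ k ∈ K, ℓ k x < b k := fun k hk =>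
    (hx k).lt_of_ne fun h => (mem_filter.1 hk).2.ne' (hz k h)
  set t := K.inf' hK fun k => (b k - ℓ k x) / ℓ k z
  have ht : 0 < t := (lt_inf'_iff hK).2 fun k hk =>
    div_pos (sub_pos.2 (hslack k hk)) (mem_filter.1 hk).2
  refine ⟨t, ht, fun k => ?_, ?_⟩
  · rw [map_add, map_smul, smul_eq_mul]
    by_cases hk : 0 < ℓ k z
    · have := (le_div_iff₀ hk).1 (inf'_le _ (mem_filter.2 ⟨mem_univ k, hk⟩) : t ≤ _)
      linarith
    · nlinarith [hx k]
  · obtain ⟨k, hk, hkt⟩ := exists_mem_eq_inf' hK fun k => (b k - ℓ k x) / ℓ k z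
    replace hkt : t = (b k - ℓ k x) / ℓ k z := hkt
    refine ⟨k, hslack k hk, ?_⟩
    rw [map_add, map_smul, smul_eq_mul, hkt, div_mul_cancel₀ _ (mem_filter.1 hk).2.ne']
    ring

theorem exists_add_smul_mem (hx : ∀ k, ℓ k x ≤ b k) (hz : ∀ k, ℓ k x = b k → ℓ k z = 0) :
    ∃ t : ℝ, 0 < t ∧ ∀ k, ℓ k (x + t • z) ≤ b k := by
  by_cases hpos : ∃ k, 0 < ℓ k z
  · obtain ⟨t, ht, hmem, -⟩ := exists_add_smul_newly_tight hx hz hpos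
    exact ⟨t, ht, hmem⟩
  · simp only [not_exists, not_lt] at hpos
    refine ⟨1, one_pos, fun k => ?_⟩
    rw [one_smul, map_add]
    linarith [hx k, hpos k]

theorem exists_maximizer_of_exists_direction (φ : V →ₗ[ℝ] ℝ) {Q : V → Prop}
    (hQ : ∀ x, (∀ k, ℓ k x ≤ b k) → ¬ Q x →
      ∃ z, (∃ k, 0 < ℓ k z) ∧ ∀ k, ℓ k x = b k → ℓ k z = 0)
    {x₀ : V} (hx₀ : ∀ k, ℓ k x₀ ≤ b k) (hmax₀ : ∀ y, (∀ k, ℓ k y ≤ b k) → φ y ≤ φ x₀) :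
    ∃ x, (∀ k, ℓ k x ≤ b k) ∧ (∀ y, (∀ k, ℓ k y ≤ b k) → φ y ≤ φ x) ∧ Q x := by
  classical
  let IsMaximizer x := (∀ k, ℓ k x ≤ b k) ∧ ∀ y, (∀ k, ℓ k y ≤ b k) → φ y ≤ φ x
  let slack x := univ.filter fun k => ℓ k x < b k
  obtain ⟨x, ⟨hx, hmax⟩, hmin⟩ :=
    exists_minimalFor_of_wellFoundedLT IsMaximizer (fun x => (slack x).card) ⟨x₀, hx₀, hmax₀⟩
  refine ⟨x, hx, hmax, by_contra fun hQx => ?_⟩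
  obtain ⟨z, hpos, hz⟩ := hQ x hx hQx
  obtain ⟨t, ht, hxt, k₀, hk₀, hk₀t⟩ := exists_add_smul_newly_tight hx hz hpos
  obtain ⟨s, hs, hxs⟩ := exists_add_smul_mem (z := -z) hx fun k hk => by
    rw [map_neg, hz k hk, neg_zero]
  have hφz : φ z = 0 := by
    have h₁ := hmax _ hxt
    have h₂ := hmax _ hxs
    simp only [map_add, map_smul, map_neg, smul_eq_mul] at h₁ h₂
    nlinarith
  have hmax' : IsMaximizer (x + t • z) := ⟨hxt, fun y hy => by
    rw [map_add, map_smul, hφz, smul_zero, add_zero]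
    exact hmax y hy⟩
  have hslack : slack (x + t • z) ⊂ slack x := by
    refine (ssubset_iff_of_subset fun k hk => ?_).2 ⟨k₀, by simpa [slack] using hk₀, by
      simp only [slack, mem_filter, mem_univ, true_and, hk₀t, lt_irrefl, not_false_eq_true]⟩
    simp only [slack, mem_filter, mem_univ, true_and] at hk ⊢
    refine (hx k).lt_of_ne fun h => hk.ne ?_
    rw [map_add, map_smul, hz k h, smul_zero, add_zero, h]
  exact (card_lt_card hslack).not_ge (hmin hmax' (card_le_card hslack.subset))

end Polyhedron

omit [Fintype ι] in
theorem isIntegerVec_iff_forall_mem_zmultiples {x : ι → ℝ} :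
    IsIntegerVec x ↔ ∀ i, x i ∈ AddSubgroup.zmultiples (1 : ℝ) := by
  simp [IsIntegerVec, AddSubgroup.mem_zmultiples_iff, eq_comm]

theorem isIntegerPolyhedron_of_exists_direction {κ : Type*} [Fintype κ]
    (ℓ : κ → (ι → ℝ) →ₗ[ℝ] ℝ) (b : κ → ℝ)
    (h : ∀ x, (∀ k, ℓ k x ≤ b k) → ¬ IsIntegerVec x →
      ∃ z, (∃ k, 0 < ℓ k z) ∧ ∀ k, ℓ k x = b k → ℓ k z = 0) :
    IsIntegerPolyhedron {x | ∀ k, ℓ k x ≤ b k} := by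
  rintro F ⟨⟨x₀, hx₀⟩, c, rfl⟩
  obtain ⟨x, hx, hmax, hint⟩ := exists_maximizer_of_exists_direction
    (∑ i, c i • LinearMap.proj i) h hx₀.1 (by simpa using hx₀.2)
  exact ⟨x, ⟨hx, by simpa using hmax⟩, hint⟩

section BoxConstraints

variable {E : Type*} [Fintype E]

def boxRow : (Finset E ⊕ Finset E) ⊕ (E ⊕ E) → (E → ℝ) →ₗ[ℝ] ℝ
  | .inl (.inl U) => ∑ e ∈ U, LinearMap.proj e
  | .inl (.inr U) => -∑ e ∈ U, LinearMap.proj e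
  | .inr (.inl e) => LinearMap.proj e
  | .inr (.inr e) => -LinearMap.proj e

def boxBound (f g : Finset E → ℤ) (c d : E → ℤ) : (Finset E ⊕ Finset E) ⊕ (E ⊕ E) → ℝ
  | .inl (.inl U) => f U
  | .inl (.inr U) => -g U
  | .inr (.inl e) => d e
  | .inr (.inr e) => -c e

omit [Fintype E] in
theorem setOf_boxRow_le (f g : Finset E → ℤ) (c d : E → ℤ) :
    {x ∈ {x : E → ℝ | ∀ U : Finset E, (g U : ℝ) ≤ ∑ e ∈ U, x e ∧ ∑ e ∈ U, x e ≤ (f U : ℝ)} |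
      ∀ i, (c i : ℝ) ≤ x i ∧ x i ≤ (d i : ℝ)} = {x | ∀ k, boxRow k x ≤ boxBound f g c d k} := by
  ext x
  simp [boxRow, boxBound, Sum.forall, forall_and]
  tauto

theorem exists_boxRow_direction [DecidableEq E] {f g : Finset E → ℤ} (hf : Submodular f)
    (hg : Submodular fun U => -g U) {c d : E → ℤ} {x : E → ℝ}
    (hx : ∀ k, boxRow k x ≤ boxBound f g c d k) (hxint : ¬ IsIntegerVec x) :
    ∃ z, (∃ k, 0 < boxRow k z) ∧ ∀ k, boxRow k x = boxBound f g c d k → boxRow k z = 0 := by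
  classical
  set S := univ.filter fun e => x e ∉ AddSubgroup.zmultiples (1 : ℝ)
  have hout : ∀ e ∉ S, x e ∈ AddSubgroup.zmultiples (1 : ℝ) := by simp [S]
  have hspan : ¬ SpansOn (tightSets f x ∪ tightSets g x) S := fun hspan =>
    hxint <| isIntegerVec_iff_forall_mem_zmultiples.2 fun e => by
      by_cases he : e ∈ S
      · exact forall_mem_zmultiples_of_spansOn_tightSets hf hg
          (fun U => by simpa [boxRow, boxBound] using hx (.inl (.inl U)))
          (fun U => by simpa [boxRow, boxBound] using hx (.inl (.inr U))) hout hspan e he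
      · exact hout e he
  obtain ⟨z, hzS, hzT, hz0⟩ : ∃ z : E → ℝ, (∀ e ∉ S, z e = 0) ∧
      (∀ U ∈ tightSets f x ∪ tightSets g x, ∑ e ∈ U, z e = 0) ∧ z ≠ 0 := by
    simpa [SpansOn] using hspan
  obtain ⟨e, he⟩ := Function.ne_iff.1 hz0
  refine ⟨z, ?_, ?_⟩
  · rcases lt_or_gt_of_ne he with h | h
    · exact ⟨.inr (.inr e), by simpa [boxRow] using h⟩
    · exact ⟨.inr (.inl e), by simpa [boxRow] using h⟩
  · rintro ((U | U) | (e | e)) hk <;> simp [boxRow, boxBound] at hk ⊢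
    · exact hzT U (mem_union_left _ (by simpa [tightSets] using hk))
    · exact hzT U (mem_union_right _ (by simpa [tightSets] using hk))
    · exact hzS e (by simp [S, hk])
    · exact hzS e (by simp [S, hk])

end BoxConstraints

/-- For `f` submodular and `g` supermodular, the polyhedron
`{x | g(U) ≤ x(U) ≤ f(U) for all U ⊆ E}` is box-integer. -/
theorem submodular_supermodular_boxInteger {E : Type*} [Fintype E] [DecidableEq E]
    (f g : Finset E → ℤ) (hf : Submodular f) (hg : Submodular (fun U => -g U)) :
    IsBoxInteger {x : E → ℝ |
      ∀ U : Finset E, (g U : ℝ) ≤ ∑ e ∈ U, x e ∧ ∑ e ∈ U, x e ≤ (f U : ℝ)} := by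
  intro c d _
  rw [setOf_boxRow_le]
  exact isIntegerPolyhedron_of_exists_direction boxRow (boxBound f g c d)
    fun _ hx hxint => exists_boxRow_direction hf hg hx hxint
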